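/- Let n >= 1 and let x, x' be nonzero elements of L such that for every k with 0 <= k <= n-1 one has phi^k(x) != 0, phi^k(x') != 0, and both Exc(phi^k(x)) and Exc(phi^k(x')) fail. If v(phi^n(x)) = v(phi^n(x')) (equality in Z union {+infinity}), then v(phi^k(x)) = v(phi^k(x')) for every 0 <= k <= n; in particular v(x) = v(x'). (The valuation-uniqueness part of Lemma 2.13 of the paper: v(x) is uniquely determined by v(phi^n(x)) when no intermediate iterate is exceptional.) -/

import Mathlib

open Filter Topology Finset

universe u

section Drinfeld

variable {L : Type u} [Field L] {k : Type*} [Field k]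

/-- The integer value of the valuation `v` at `y` (junk value `0` at `y = 0`). -/
noncomputable def vz (v : L → WithTop ℤ) (y : L) : ℤ := (v y).untopD 0

/-- `v : L → ℤ ∪ {∞}` is a normalized discrete valuation: `v 0 = ∞`, `v` is finite and
surjective onto `ℤ` on nonzero elements, `v (x * y) = v x + v y` and
`v (x + y) ≥ min (v x) (v y)`. -/
structure IsDVal (v : L → WithTop ℤ) : Prop where
  map_zero : v 0 = ⊤
  ne_top : ∀ x : L, x ≠ 0 → v x ≠ ⊤
  map_mul : ∀ x y : L, v (x * y) = v x + v y
  add_min : ∀ x y : L, min (v x) (v y) ≤ v (x + y)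
  surj : ∀ n : ℤ, ∃ x : L, v x = (n : WithTop ℤ)

/-- `res : L → k` restricted to the valuation ring of `v` is the quotient map onto the
residue field `k` of `v`. -/
structure IsResidue (v : L → WithTop ℤ) (res : L → k) : Prop where
  map_one : res 1 = 1
  map_add : ∀ x y : L, 0 ≤ v x → 0 ≤ v y → res (x + y) = res x + res y
  map_mul : ∀ x y : L, 0 ≤ v x → 0 ≤ v y → res (x * y) = res x * res y
  eq_zero_iff : ∀ x : L, 0 ≤ v x → (res x = 0 ↔ 0 < v x)
  surj : ∀ c : k, ∃ x : L, 0 ≤ v x ∧ res x = c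

/-- The angular component of `y` at `v`, with respect to the uniformizer `π` and the
residue map `res`: the residue of `y * π ^ (-v y)`. -/
noncomputable def ac (v : L → WithTop ℤ) (π : L) (res : L → k) (y : L) : k :=
  res (y * π ^ (-(vz v y)))

/-- The `F_q`-linear map `φ(x) = ∑_{i=r₀}^{r} a i * x^(q^i)`. -/
noncomputable def phiMap (q r₀ r : ℕ) (a : ℕ → L) (x : L) : L :=
  ∑ i ∈ Finset.Icc r₀ r, a i * x ^ q ^ i

/-- The set `P_v ⊆ ℚ` of possible exceptional valuations:
`(v(a i) - v(a j))/(q^j - q^i)` for `r₀ ≤ i < j ≤ r` with `a i ≠ 0 ≠ a j`, together with `0`. -/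
def Pset (q : ℕ) (v : L → WithTop ℤ) (r₀ r : ℕ) (a : ℕ → L) : Set ℚ :=
  {0} ∪ {α : ℚ | ∃ i j : ℕ, r₀ ≤ i ∧ i < j ∧ j ≤ r ∧ a i ≠ 0 ∧ a j ≠ 0 ∧
      α = ((vz v (a i) : ℚ) - (vz v (a j) : ℚ)) / ((q : ℚ) ^ j - (q : ℚ) ^ i)}

/-- The set `J(α)` of indices where `v(a i) + q^i * α` attains its minimum. -/
def Jset (q : ℕ) (v : L → WithTop ℤ) (r₀ r : ℕ) (a : ℕ → L) (α : ℚ) : Set ℕ :=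
  {i : ℕ | r₀ ≤ i ∧ i ≤ r ∧ a i ≠ 0 ∧
    ∀ j : ℕ, r₀ ≤ j → j ≤ r → a j ≠ 0 →
      (vz v (a i) : ℚ) + (q : ℚ) ^ i * α ≤ (vz v (a j) : ℚ) + (q : ℚ) ^ j * α}

open scoped Classical in
/-- The set `R_v(α) ⊆ k_v`: `1` together with the nonzero roots of
`∑_{i ∈ J(α)} ac(a i) * X^(q^i)`. -/
noncomputable def Rset (q : ℕ) (v : L → WithTop ℤ) (π : L) (res : L → k)
    (r₀ r : ℕ) (a : ℕ → L) (α : ℚ) : Set k :=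
  {1} ∪ {γ : k | γ ≠ 0 ∧
    ∑ i ∈ Finset.Icc r₀ r,
      (if i ∈ Jset q v r₀ r a α then ac v π res (a i) * γ ^ q ^ i else 0) = 0}

/-- The exceptional condition `Exc(y)`: `v y ∈ P_v` and `ac y ∈ R_v(v y)`. -/
def Exc (q : ℕ) (v : L → WithTop ℤ) (π : L) (res : L → k)
    (r₀ r : ℕ) (a : ℕ → L) (y : L) : Prop :=
  ((vz v y : ℚ) ∈ Pset q v r₀ r a) ∧ ac v π res y ∈ Rset q v π res r₀ r a ((vz v y : ℚ))

/-- The sequence `min(0, v(φⁿ x)) / q^(r n)` whose limit is minus the local height of `x`. -/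
noncomputable def locSeq (q r : ℕ) (v : L → WithTop ℤ) (φ : L → L) (x : L) (n : ℕ) : ℝ :=
  ((min 0 (vz v (φ^[n] x)) : ℤ) : ℝ) / (q : ℝ) ^ (r * n)


/-!
If `y ≠ 0` has valuation `m`, every term `a i * y ^ q ^ i` of `φ y` has valuation at least
`M(m) = min_i (v(a i) + q^i m)`, and the residue of `φ y / π^M(m)` is the value at `ac y` of the
polynomial `∑_{i ∈ J(m)} ac(a i) X^(q^i)`. If `y` is not exceptional this value is nonzero: either
`m ∉ P_v`, so the minimum is attained only once and the polynomial is a monomial, or `ac y` is not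
a root. Hence `v(φ y) = M(v y)`, and since `M` is strictly increasing, `v(φ y)` determines `v y`.
Descending from `k = n` gives the claim.
-/

namespace IsDVal

variable {v : L → WithTop ℤ}

theorem map_one (hv : IsDVal v) : v 1 = 0 := by
  have h := hv.map_mul 1 1
  rw [one_mul] at h
  lift v 1 to ℤ using hv.ne_top 1 one_ne_zero with n
  have : n = n + n := by exact_mod_cast h
  simp [show n = 0 by omega]

theorem coe_vz (hv : IsDVal v) {y : L} (hy : y ≠ 0) : (vz v y : WithTop ℤ) = v y := by
  lift v y to ℤ using hv.ne_top y hy with n hn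
  simp [vz, ← hn]

theorem vz_one (hv : IsDVal v) : vz v (1 : L) = 0 := by
  simp [vz, hv.map_one]

theorem vz_mul (hv : IsDVal v) {x y : L} (hx : x ≠ 0) (hy : y ≠ 0) :
    vz v (x * y) = vz v x + vz v y := by
  have h := hv.coe_vz (mul_ne_zero hx hy)
  rw [hv.map_mul, ← hv.coe_vz hx, ← hv.coe_vz hy] at h
  exact_mod_cast h

theorem vz_pow (hv : IsDVal v) {x : L} (hx : x ≠ 0) (n : ℕ) : vz v (x ^ n) = n * vz v x := by
  induction n with
  | zero => simp [hv.vz_one]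
  | succ n ih => rw [pow_succ, hv.vz_mul (pow_ne_zero n hx) hx, ih]; push_cast; ring

theorem vz_inv (hv : IsDVal v) {x : L} (hx : x ≠ 0) : vz v x⁻¹ = -vz v x := by
  have h := hv.vz_mul hx (inv_ne_zero hx)
  rw [mul_inv_cancel₀ hx, hv.vz_one] at h
  omega

theorem vz_zpow (hv : IsDVal v) {x : L} (hx : x ≠ 0) (z : ℤ) : vz v (x ^ z) = z * vz v x := by
  cases z with
  | ofNat n => rw [Int.ofNat_eq_natCast, zpow_natCast, hv.vz_pow hx]
  | negSucc n =>
    rw [zpow_negSucc, hv.vz_inv (pow_ne_zero _ hx), hv.vz_pow hx, Int.negSucc_eq]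
    push_cast; ring

theorem le_sum (hv : IsDVal v) {ι : Type*} (s : Finset ι) (f : ι → L) {M : WithTop ℤ}
    (h : ∀ i ∈ s, M ≤ v (f i)) : M ≤ v (∑ i ∈ s, f i) :=
  Finset.sum_induction f (fun z => M ≤ v z)
    (fun _ _ hx hy => (le_min hx hy).trans (hv.add_min _ _)) (by simp [hv.map_zero]) h

variable {π : L}

theorem uniformizer_ne_zero (hv : IsDVal v) (hπ : v π = 1) : π ≠ 0 := by
  rintro rfl
  simp [hv.map_zero] at hπ

theorem vz_mul_uniformizer_zpow (hv : IsDVal v) (hπ : v π = 1) {y : L} (hy : y ≠ 0) (z : ℤ) :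
    vz v (y * π ^ z) = vz v y + z := by
  have hπ0 := hv.uniformizer_ne_zero hπ
  have hvzπ : vz v π = 1 := by simp [vz, hπ]
  rw [hv.vz_mul hy (zpow_ne_zero z hπ0), hv.vz_zpow hπ0, hvzπ, mul_one]

theorem v_mul_uniformizer_zpow (hv : IsDVal v) (hπ : v π = 1) {y : L} (hy : y ≠ 0) (z : ℤ) :
    v (y * π ^ z) = ((vz v y + z : ℤ) : WithTop ℤ) := by
  rw [← hv.vz_mul_uniformizer_zpow hπ hy,
    hv.coe_vz (mul_ne_zero hy (zpow_ne_zero z (hv.uniformizer_ne_zero hπ)))]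

theorem v_uniformizer_zpow (hv : IsDVal v) (hπ : v π = 1) (z : ℤ) : v (π ^ z) = z := by
  simpa [hv.vz_one] using hv.v_mul_uniformizer_zpow hπ one_ne_zero z

theorem v_mul_zpow_neg_vz (hv : IsDVal v) (hπ : v π = 1) {y : L} (hy : y ≠ 0) :
    v (y * π ^ (-vz v y)) = 0 := by
  rw [hv.v_mul_uniformizer_zpow hπ hy, add_neg_cancel, WithTop.coe_zero]

end IsDVal

namespace IsResidue

variable {v : L → WithTop ℤ} {π : L} {res : L → k}

theorem map_zero (hres : IsResidue v res) (hv : IsDVal v) : res 0 = 0 :=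
  (hres.eq_zero_iff 0 (by simp [hv.map_zero])).mpr (by simp [hv.map_zero])

theorem map_sum (hres : IsResidue v res) (hv : IsDVal v) {ι : Type*} (s : Finset ι) (f : ι → L)
    (h : ∀ i ∈ s, 0 ≤ v (f i)) : res (∑ i ∈ s, f i) = ∑ i ∈ s, res (f i) := by
  classical
  induction s using Finset.induction with
  | empty => simp [hres.map_zero hv]
  | insert b s hb ih =>
    have hs : ∀ i ∈ s, 0 ≤ v (f i) := fun i hi => h i (Finset.mem_insert_of_mem hi)
    rw [Finset.sum_insert hb, Finset.sum_insert hb,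
      hres.map_add _ _ (h b (s.mem_insert_self b)) (hv.le_sum s f hs), ih hs]

theorem ac_ne_zero (hres : IsResidue v res) (hv : IsDVal v) (hπ : v π = 1) {y : L}
    (hy : y ≠ 0) : ac v π res y ≠ 0 := by
  have h0 := hv.v_mul_zpow_neg_vz hπ hy
  rw [ac, Ne, hres.eq_zero_iff _ h0.ge, h0]
  exact lt_irrefl 0

theorem ac_mul (hres : IsResidue v res) (hv : IsDVal v) (hπ : v π = 1) {x y : L}
    (hx : x ≠ 0) (hy : y ≠ 0) : ac v π res (x * y) = ac v π res x * ac v π res y := by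
  have hπ0 := hv.uniformizer_ne_zero hπ
  have hsplit : x * y * π ^ (-vz v (x * y)) = (x * π ^ (-vz v x)) * (y * π ^ (-vz v y)) := by
    rw [hv.vz_mul hx hy, neg_add, zpow_add₀ hπ0]; ring
  rw [ac, hsplit,
    hres.map_mul _ _ (hv.v_mul_zpow_neg_vz hπ hx).ge (hv.v_mul_zpow_neg_vz hπ hy).ge]
  rfl

theorem ac_pow (hres : IsResidue v res) (hv : IsDVal v) (hπ : v π = 1) {y : L}
    (hy : y ≠ 0) (n : ℕ) : ac v π res (y ^ n) = ac v π res y ^ n := by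
  induction n with
  | zero => simp [ac, hv.vz_one, hres.map_one]
  | succ n ih => rw [pow_succ, hres.ac_mul hv hπ (pow_ne_zero n hy) hy, ih, pow_succ]

theorem res_mul_zpow_neg (hres : IsResidue v res) (hv : IsDVal v) (hπ : v π = 1) {t : L}
    {M : ℤ} (ht : (M : WithTop ℤ) ≤ v t) :
    0 ≤ v (t * π ^ (-M)) ∧
      res (t * π ^ (-M)) = if v t = M then ac v π res t else 0 := by
  rcases eq_or_ne t 0 with rfl | ht0
  · simp [hv.map_zero, hres.map_zero hv]
  have hvt := hv.coe_vz ht0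
  rw [← hvt, WithTop.coe_le_coe] at ht
  have hvu := hv.v_mul_uniformizer_zpow hπ ht0 (-M)
  refine ⟨hvu ▸ WithTop.coe_nonneg.mpr (by omega), ?_⟩
  split_ifs with hM
  · rw [← hvt, WithTop.coe_inj] at hM
    rw [ac, hM]
  · have hlt : M < vz v t := lt_of_le_of_ne ht fun h => hM (by rw [← hvt, h])
    exact (hres.eq_zero_iff _ (hvu ▸ WithTop.coe_nonneg.mpr (by omega))).mpr
      (hvu ▸ WithTop.coe_pos.mpr (by omega))

theorem v_sum_eq_of_sum_ac_ne_zero (hres : IsResidue v res) (hv : IsDVal v) (hπ : v π = 1)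
    {ι : Type*} (s : Finset ι) (t : ι → L) {M : ℤ} (hle : ∀ i ∈ s, (M : WithTop ℤ) ≤ v (t i))
    (hac : ∑ i ∈ s with v (t i) = M, ac v π res (t i) ≠ 0) : v (∑ i ∈ s, t i) = M := by
  have hterm := fun i hi => hres.res_mul_zpow_neg hv hπ (hle i hi)
  set u := (∑ i ∈ s, t i) * π ^ (-M) with hu_def
  have hu : u = ∑ i ∈ s, t i * π ^ (-M) := Finset.sum_mul _ _ _
  have hu_nonneg : 0 ≤ v u := hu ▸ hv.le_sum _ _ fun i hi => (hterm i hi).1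
  have hres_u : res u = ∑ i ∈ s with v (t i) = M, ac v π res (t i) := by
    rw [hu, hres.map_sum hv _ _ fun i hi => (hterm i hi).1, Finset.sum_filter]
    exact Finset.sum_congr rfl fun i hi => (hterm i hi).2
  have hvu : v u = 0 := by
    refine le_antisymm (not_lt.mp fun hpos => hac ?_) hu_nonneg
    rw [← hres_u]
    exact (hres.eq_zero_iff _ hu_nonneg).mpr hpos
  have hsum : ∑ i ∈ s, t i = u * π ^ M := by
    rw [hu_def, mul_assoc, ← zpow_add₀ (hv.uniformizer_ne_zero hπ), neg_add_cancel, zpow_zero,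
      mul_one]
  rw [hsum, hv.map_mul, hvu, zero_add, hv.v_uniformizer_zpow hπ]

end IsResidue

section NewtonPolygon

variable (q : ℕ) (v : L → WithTop ℤ) {r₀ r : ℕ} {a : ℕ → L}

open scoped Classical in
noncomputable def coeffSupport (r₀ r : ℕ) (a : ℕ → L) : Finset ℕ :=
  {i ∈ Finset.Icc r₀ r | a i ≠ 0}

theorem mem_coeffSupport {i : ℕ} : i ∈ coeffSupport r₀ r a ↔ i ∈ Finset.Icc r₀ r ∧ a i ≠ 0 := by
  simp [coeffSupport]

noncomputable def newtonMin (hne : (coeffSupport r₀ r a).Nonempty) (m : ℤ) : ℤ :=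
  (coeffSupport r₀ r a).inf' hne fun i => vz v (a i) + (q : ℤ) ^ i * m

variable {q v}

theorem newtonMin_le (hne : (coeffSupport r₀ r a).Nonempty) (m : ℤ) {i : ℕ}
    (hi : i ∈ coeffSupport r₀ r a) : newtonMin q v hne m ≤ vz v (a i) + (q : ℤ) ^ i * m :=
  Finset.inf'_le _ hi

theorem newtonMin_strictMono (hq : 0 < q) (hne : (coeffSupport r₀ r a).Nonempty) :
    StrictMono (newtonMin q v hne) := by
  intro m m' hm
  obtain ⟨i, hi, hi_eq⟩ := Finset.exists_mem_eq_inf' hne fun i => vz v (a i) + (q : ℤ) ^ i * m'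
  have hqi : (0 : ℤ) < (q : ℤ) ^ i := pow_pos (by exact_mod_cast hq) i
  calc newtonMin q v hne m ≤ vz v (a i) + (q : ℤ) ^ i * m := newtonMin_le hne m hi
    _ < vz v (a i) + (q : ℤ) ^ i * m' := by gcongr
    _ = newtonMin q v hne m' := hi_eq.symm

theorem mem_Jset_iff (hne : (coeffSupport r₀ r a).Nonempty) (m : ℤ) (i : ℕ) :
    i ∈ Jset q v r₀ r a m ↔
      i ∈ coeffSupport r₀ r a ∧ vz v (a i) + (q : ℤ) ^ i * m = newtonMin q v hne m := by
  constructor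
  · rintro ⟨hr₀i, hir, hai, hmin⟩
    have hi : i ∈ coeffSupport r₀ r a :=
      mem_coeffSupport.mpr ⟨Finset.mem_Icc.mpr ⟨hr₀i, hir⟩, hai⟩
    refine ⟨hi, le_antisymm (Finset.le_inf' _ _ fun j hj => ?_) (newtonMin_le hne m hi)⟩
    obtain ⟨hj, haj⟩ := mem_coeffSupport.mp hj
    rw [Finset.mem_Icc] at hj
    exact_mod_cast hmin j hj.1 hj.2 haj
  · rintro ⟨hi, heq⟩
    obtain ⟨hi, hai⟩ := mem_coeffSupport.mp hi
    rw [Finset.mem_Icc] at hi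
    refine ⟨hi.1, hi.2, hai, fun j hr₀j hjr haj => ?_⟩
    have hj := heq ▸
      newtonMin_le hne m (mem_coeffSupport.mpr ⟨Finset.mem_Icc.mpr ⟨hr₀j, hjr⟩, haj⟩)
    exact_mod_cast hj

theorem Jset_nonempty (hne : (coeffSupport r₀ r a).Nonempty) (m : ℤ) :
    (Jset q v r₀ r a m).Nonempty := by
  obtain ⟨i, hi, hi_eq⟩ := Finset.exists_mem_eq_inf' hne fun i => vz v (a i) + (q : ℤ) ^ i * m
  exact ⟨i, (mem_Jset_iff hne m i).mpr ⟨hi, hi_eq.symm⟩⟩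

/-- Two minimizing indices `i < j` force `α = (v(a i) - v(a j)) / (q^j - q^i) ∈ P_v`. -/
theorem Jset_subsingleton (hq : 1 < q) {α : ℚ} (hα : α ∉ Pset q v r₀ r a) :
    (Jset q v r₀ r a α).Subsingleton := by
  suffices ∀ i ∈ Jset q v r₀ r a α, ∀ j ∈ Jset q v r₀ r a α, ¬ i < j by
    intro i hi j hj
    exact le_antisymm (not_lt.mp (this j hj i hi)) (not_lt.mp (this i hi j hj))
  rintro i ⟨hr₀i, -, hai, hi_min⟩ j ⟨hr₀j, hjr, haj, hj_min⟩ hij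
  have heq := le_antisymm (hi_min j hr₀j hjr haj) (hj_min i hr₀i (hij.le.trans hjr) hai)
  have hqij : (q : ℚ) ^ i < (q : ℚ) ^ j := pow_lt_pow_right₀ (by exact_mod_cast hq) hij
  refine hα (Or.inr ⟨i, j, hr₀i, hij, hjr, hai, haj, ?_⟩)
  rw [eq_div_iff (sub_ne_zero.mpr hqij.ne')]
  linarith

end NewtonPolygon

section PhiMap

variable {v : L → WithTop ℤ} {π : L} {res : L → k} {q r₀ r : ℕ} {a : ℕ → L}

theorem v_coeff_mul_pow (hv : IsDVal v) {y : L} (hy : y ≠ 0) {i : ℕ} (hai : a i ≠ 0) :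
    v (a i * y ^ q ^ i) = ((vz v (a i) + (q : ℤ) ^ i * vz v y : ℤ) : WithTop ℤ) := by
  rw [← hv.coe_vz (mul_ne_zero hai (pow_ne_zero _ hy)), hv.vz_mul hai (pow_ne_zero _ hy),
    hv.vz_pow hy]
  push_cast
  rfl

theorem newtonMin_le_v_term (hv : IsDVal v) (hne : (coeffSupport r₀ r a).Nonempty) {y : L}
    (hy : y ≠ 0) {i : ℕ} (hi : i ∈ Finset.Icc r₀ r) :
    (newtonMin q v hne (vz v y) : WithTop ℤ) ≤ v (a i * y ^ q ^ i) := by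
  rcases eq_or_ne (a i) 0 with hai | hai
  · simp [hai, hv.map_zero]
  rw [v_coeff_mul_pow hv hy hai, WithTop.coe_le_coe]
  exact newtonMin_le hne _ (mem_coeffSupport.mpr ⟨hi, hai⟩)

theorem v_term_eq_newtonMin_iff (hv : IsDVal v) (hne : (coeffSupport r₀ r a).Nonempty) {y : L}
    (hy : y ≠ 0) {i : ℕ} (hi : i ∈ Finset.Icc r₀ r) :
    v (a i * y ^ q ^ i) = newtonMin q v hne (vz v y) ↔ i ∈ Jset q v r₀ r a (vz v y) := by
  rcases eq_or_ne (a i) 0 with hai | hai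
  · simp only [hai, zero_mul, hv.map_zero, WithTop.top_ne_coe, false_iff]
    exact fun hJ => hJ.2.2.1 hai
  rw [v_coeff_mul_pow hv hy hai, WithTop.coe_inj, mem_Jset_iff hne]
  exact (and_iff_right (mem_coeffSupport.mpr ⟨hi, hai⟩)).symm

open scoped Classical in
theorem residual_sum_ne_zero_of_not_exc (hv : IsDVal v) (hπ : v π = 1)
    (hres : IsResidue v res) (hq : 1 < q) (hne : (coeffSupport r₀ r a).Nonempty) {y : L}
    (hy : y ≠ 0) (hexc : ¬ Exc q v π res r₀ r a y) :
    ∑ i ∈ Finset.Icc r₀ r, (if i ∈ Jset q v r₀ r a (vz v y) then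
      ac v π res (a i) * ac v π res y ^ q ^ i else 0) ≠ 0 := by
  by_cases hP : (vz v y : ℚ) ∈ Pset q v r₀ r a
  · exact fun h0 => hexc ⟨hP, Or.inr ⟨hres.ac_ne_zero hv hπ hy, h0⟩⟩
  obtain ⟨i, hi⟩ := Jset_nonempty hne (vz v y)
  rw [Finset.sum_eq_single_of_mem i (Finset.mem_Icc.mpr ⟨hi.1, hi.2.1⟩)
    fun j _ hji => if_neg fun hj => hji (Jset_subsingleton hq hP hj hi), if_pos hi]
  exact mul_ne_zero (hres.ac_ne_zero hv hπ hi.2.2.1)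
    (pow_ne_zero _ (hres.ac_ne_zero hv hπ hy))

theorem v_phiMap_of_not_exc (hv : IsDVal v) (hπ : v π = 1) (hres : IsResidue v res)
    (hq : 1 < q) (hne : (coeffSupport r₀ r a).Nonempty) {y : L} (hy : y ≠ 0)
    (hexc : ¬ Exc q v π res r₀ r a y) :
    v (phiMap q r₀ r a y) = newtonMin q v hne (vz v y) := by
  refine hres.v_sum_eq_of_sum_ac_ne_zero hv hπ _ _
    (fun i hi => newtonMin_le_v_term hv hne hy hi) ?_
  convert residual_sum_ne_zero_of_not_exc hv hπ hres hq hne hy hexc using 1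
  rw [Finset.sum_filter]
  refine Finset.sum_congr rfl fun i hi => ?_
  by_cases hJ : i ∈ Jset q v r₀ r a (vz v y)
  · rw [if_pos ((v_term_eq_newtonMin_iff hv hne hy hi).mpr hJ), if_pos hJ,
      hres.ac_mul hv hπ hJ.2.2.1 (pow_ne_zero _ hy), hres.ac_pow hv hπ hy]
  · rw [if_neg (mt (v_term_eq_newtonMin_iff hv hne hy hi).mp hJ), if_neg hJ]

theorem v_eq_of_v_phiMap_eq (hv : IsDVal v) (hπ : v π = 1) (hres : IsResidue v res)
    (hq : 1 < q) (hne : (coeffSupport r₀ r a).Nonempty) {y y' : L} (hy : y ≠ 0) (hy' : y' ≠ 0)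
    (hexc : ¬ Exc q v π res r₀ r a y) (hexc' : ¬ Exc q v π res r₀ r a y')
    (h : v (phiMap q r₀ r a y) = v (phiMap q r₀ r a y')) : v y = v y' := by
  rw [v_phiMap_of_not_exc hv hπ hres hq hne hy hexc,
    v_phiMap_of_not_exc hv hπ hres hq hne hy' hexc', WithTop.coe_inj] at h
  rw [← hv.coe_vz hy, ← hv.coe_vz hy', (newtonMin_strictMono (by omega) hne).injective h]

end PhiMap

theorem statement9_general
    (p q : ℕ) (hp : p.Prime) (hq : ∃ s : ℕ, 0 < s ∧ q = p ^ s)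
    (v : L → WithTop ℤ) (hv : IsDVal v)
    (π : L) (hπ : v π = 1) (res : L → k) (hres : IsResidue v res)
    (r₀ r : ℕ) (hr₀r : r₀ ≤ r)
    (a : ℕ → L) (har : a r = 1)
    (n : ℕ) (x x' : L)
    (hit : ∀ j : ℕ, j < n →
      (phiMap q r₀ r a)^[j] x ≠ 0 ∧ (phiMap q r₀ r a)^[j] x' ≠ 0 ∧
      ¬ Exc q v π res r₀ r a ((phiMap q r₀ r a)^[j] x) ∧
      ¬ Exc q v π res r₀ r a ((phiMap q r₀ r a)^[j] x'))
    (heq : v ((phiMap q r₀ r a)^[n] x) = v ((phiMap q r₀ r a)^[n] x')) :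
    ∀ j : ℕ, j ≤ n → v ((phiMap q r₀ r a)^[j] x) = v ((phiMap q r₀ r a)^[j] x') := by
  have hq1 : 1 < q := by
    obtain ⟨s, hs, rfl⟩ := hq
    exact Nat.one_lt_pow hs.ne' hp.one_lt
  have hne : (coeffSupport r₀ r a).Nonempty := ⟨r, by simp [mem_coeffSupport, hr₀r, har]⟩
  intro j hj
  induction hj using Nat.decreasingInduction with
  | self => exact heq
  | of_succ j hjn ih =>
    obtain ⟨hy, hy', hexc, hexc'⟩ := hit j hjn
    rw [Function.iterate_succ_apply', Function.iterate_succ_apply'] at ih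
    exact v_eq_of_v_phiMap_eq hv hπ hres hq1 hne hy hy' hexc hexc' ih

/-- The valuation-uniqueness part of Lemma 2.13: if no iterate `φᵏ(x)`, `φᵏ(x')` for
`k < n` is zero or exceptional and `v(φⁿ(x)) = v(φⁿ(x'))`, then `v(φᵏ(x)) = v(φᵏ(x'))`
for all `k ≤ n`; in particular `v(x) = v(x')`. -/
theorem statement9
    (p q : ℕ) (hp : p.Prime) (hq : ∃ s : ℕ, 0 < s ∧ q = p ^ s)
    [CharP L p] (F : Subfield L) (hF : Nat.card F = q)
    (v : L → WithTop ℤ) (hv : IsDVal v)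
    (π : L) (hπ : v π = 1) (res : L → k) (hres : IsResidue v res)
    (r₀ r : ℕ) (hr1 : 1 ≤ r) (hr₀r : r₀ ≤ r)
    (a : ℕ → L) (har₀ : a r₀ ≠ 0) (har : a r = 1)
    (n : ℕ) (hn : 1 ≤ n) (x x' : L) (hx : x ≠ 0) (hx' : x' ≠ 0)
    (hit : ∀ j : ℕ, j < n →
      (phiMap q r₀ r a)^[j] x ≠ 0 ∧ (phiMap q r₀ r a)^[j] x' ≠ 0 ∧
      ¬ Exc q v π res r₀ r a ((phiMap q r₀ r a)^[j] x) ∧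
      ¬ Exc q v π res r₀ r a ((phiMap q r₀ r a)^[j] x'))
    (heq : v ((phiMap q r₀ r a)^[n] x) = v ((phiMap q r₀ r a)^[n] x')) :
    ∀ j : ℕ, j ≤ n → v ((phiMap q r₀ r a)^[j] x) = v ((phiMap q r₀ r a)^[j] x') :=
  statement9_general p q hp hq v hv π hπ res hres r₀ r hr₀r a har n x x' hit heq

end Drinfeld
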